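/- Let V be a type and F a connected simple graph multifunction on V. If F is not bipartite, then the multifunction v ↦ F^{2∪}(v) is connected. -/
import Mathlib


/-- The union image `S_F` of a multifunction. -/
def unionImage {V : Type*} (F : V → Set V) (A : Set V) : Set V := ⋃ a ∈ A, F a

/-- The `n`-th union iterate `F^{n∪}(v) = S_F^[n] {v}`. -/
def iterUnion {V : Type*} (F : V → Set V) (n : ℕ) (v : V) : Set V :=
  (unionImage F)^[n] {v}

/-- A multifunction is connected if every two vertices are joined by some walk
of positive length. -/
def ConnectedMF {V : Type*} (G : V → Set V) : Prop :=
  ∀ u w : V, ∃ n ≥ 1, u ∈ iterUnion G n w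

/-- The complete preimage `F_-(B) = {x | F(x) ∩ B ≠ ∅}`. -/
def preimMF {V : Type*} (F : V → Set V) (B : Set V) : Set V :=
  {x | (F x ∩ B).Nonempty}

/-- A set is independent for `F` if `U ∩ F_-(U) = ∅`. -/
def IndepMF {V : Type*} (F : V → Set V) (U : Set V) : Prop :=
  U ∩ preimMF F U = ∅

/-- `F` is bipartite if `V` splits into two nonempty disjoint independent sets. -/
def BipartiteMF {V : Type*} (F : V → Set V) : Prop :=
  ∃ U W : Set V, U.Nonempty ∧ W.Nonempty ∧ IndepMF F U ∧ IndepMF F W ∧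
    U ∪ W = Set.univ ∧ U ∩ W = ∅

/-- `F` is a simple graph multifunction: loopless and undirected. -/
def SimpleGraphMF {V : Type*} (F : V → Set V) : Prop :=
  (∀ v, v ∉ F v) ∧ (∀ u v, u ∈ F v ↔ v ∈ F u)

lemma mem_unionImage {V : Type*} {F : V → Set V} {A : Set V} {x : V} :
    x ∈ unionImage F A ↔ ∃ a ∈ A, x ∈ F a := by simp [unionImage]

lemma mem_iterate_union {V : Type*} (F : V → Set V) (n : ℕ) (A : Set V) (x : V) :
    x ∈ (unionImage F)^[n] A ↔ ∃ a ∈ A, x ∈ (unionImage F)^[n] {a} := by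
  induction n generalizing x with
  | zero => simp
  | succ n ih =>
    rw [Function.iterate_succ_apply']
    constructor
    · intro hx
      rcases mem_unionImage.mp hx with ⟨b, hb, hxb⟩
      rcases (ih b).mp hb with ⟨a, ha, hba⟩
      exact ⟨a, ha, by
        rw [Function.iterate_succ_apply']
        exact mem_unionImage.mpr ⟨b, hba, hxb⟩⟩
    · rintro ⟨a, ha, hxa⟩
      rw [Function.iterate_succ_apply'] at hxa
      rcases mem_unionImage.mp hxa with ⟨b, hb, hxb⟩
      exact mem_unionImage.mpr ⟨b, (ih b).mpr ⟨a, ha, hb⟩, hxb⟩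

lemma iter_trans {V : Type*} {F : V → Set V} {x y z : V} {m n : ℕ}
    (h1 : x ∈ iterUnion F m y) (h2 : y ∈ iterUnion F n z) :
    x ∈ iterUnion F (m + n) z := by
  rw [iterUnion, Function.iterate_add_apply]
  exact (mem_iterate_union F m _ x).mpr ⟨y, h2, h1⟩

lemma mem_iter_front {V : Type*} {F : V → Set V} {n : ℕ} {x y : V} :
    x ∈ iterUnion F (n + 1) y ↔ ∃ a ∈ iterUnion F n y, x ∈ F a := by
  rw [iterUnion, Function.iterate_succ_apply']
  exact mem_unionImage

lemma mem_iter_back {V : Type*} {F : V → Set V} {n : ℕ} {x y : V} :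
    x ∈ iterUnion F (n + 1) y ↔ ∃ a ∈ F y, x ∈ iterUnion F n a := by
  rw [iterUnion, Function.iterate_succ_apply,
    show unionImage F {y} = F y by simp [unionImage]]
  exact mem_iterate_union F n (F y) x

lemma iter_one {V : Type*} {F : V → Set V} {x y : V} :
    x ∈ iterUnion F 1 y ↔ x ∈ F y := by
  simp [iterUnion, unionImage]

lemma iter_symm {V : Type*} {F : V → Set V} (hF : ∀ u v, u ∈ F v ↔ v ∈ F u) :
    ∀ (n : ℕ) (x y : V), x ∈ iterUnion F n y ↔ y ∈ iterUnion F n x := by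
  intro n
  induction n with
  | zero => intro x y; simp [iterUnion, eq_comm]
  | succ n ih =>
    intro x y
    rw [mem_iter_front, mem_iter_back]
    constructor
    · rintro ⟨a, ha, hxa⟩
      exact ⟨a, (hF x a).mp hxa, (ih a y).mp ha⟩
    · rintro ⟨a, ha, hya⟩
      exact ⟨a, (ih y a).mp hya, (hF x a).mpr ha⟩

lemma iter_sq {V : Type*} (F : V → Set V) (m : ℕ) (v : V) :
    iterUnion (fun v => iterUnion F 2 v) m v = iterUnion F (2 * m) v := by
  have h : unionImage (fun v => iterUnion F 2 v) = (unionImage F)^[2] := by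
    funext A; ext x
    rw [mem_unionImage, mem_iterate_union F 2 A x]
    rfl
  rw [iterUnion, h, ← Function.iterate_mul]
  rfl

/-- If a connected simple graph multifunction is not bipartite then `F^{2∪}`
is connected. -/
theorem stmt_11 {V : Type*} (F : V → Set V)
    (hsg : SimpleGraphMF F) (hconn : ConnectedMF F)
    (hnbip : ¬ BipartiteMF F) :
    ConnectedMF (fun v => iterUnion F 2 v) := by
  intro u w
  have hsymm := hsg.2
  suffices h : ∃ m ≥ 1, u ∈ iterUnion F (2 * m) w by
    rcases h with ⟨m, hm, hu⟩
    exact ⟨m, hm, by rw [iter_sq]; exact hu⟩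
  have hne : ∀ v : V, (F v).Nonempty := by
    intro v
    rcases hconn v v with ⟨n, hn, hv⟩
    match n, hn with
    | (n + 1), _ =>
      rcases mem_iter_back.mp hv with ⟨a, ha, _⟩
      exact ⟨a, ha⟩
  set U : Set V := {x | ∃ k, 1 ≤ k ∧ Even k ∧ x ∈ iterUnion F k w} with hU
  set W : Set V := {x | ∃ k, Odd k ∧ x ∈ iterUnion F k w} with hW
  by_cases hUW : (U ∩ W).Nonempty
  · rcases hUW with ⟨x, ⟨p, hp1, hpe, hxp⟩, ⟨q, hqo, hxq⟩⟩
    have hwx : w ∈ iterUnion F q x := (iter_symm hsymm q x w).mp hxq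
    have hclosed : w ∈ iterUnion F (q + p) w := iter_trans hwx hxp
    rcases hconn u w with ⟨n, hn1, hun⟩
    rcases Nat.even_or_odd n with he | ho
    · rcases he with ⟨m, hm⟩
      exact ⟨m, by omega, by rw [show 2 * m = n by omega]; exact hun⟩
    · have hcomp : u ∈ iterUnion F (n + (q + p)) w := iter_trans hun hclosed
      rcases ho with ⟨a, ha⟩
      rcases hqo with ⟨b, hb⟩
      rcases hpe with ⟨c, hc⟩
      exact ⟨a + b + c + 1, by omega,
        by rw [show 2 * (a + b + c + 1) = n + (q + p) by omega]; exact hcomp⟩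
  · exfalso
    apply hnbip
    rw [Set.not_nonempty_iff_eq_empty] at hUW
    refine ⟨U, W, ?_, ?_, ?_, ?_, ?_, hUW⟩
    · rcases hne w with ⟨a, ha⟩
      rcases hne a with ⟨c, hc⟩
      exact ⟨c, 2, by omega, ⟨1, rfl⟩,
        iter_trans (iter_one.mpr hc) (iter_one.mpr ha)⟩
    · rcases hne w with ⟨a, ha⟩
      exact ⟨a, 1, ⟨0, rfl⟩, iter_one.mpr ha⟩
    · rw [IndepMF, Set.eq_empty_iff_forall_notMem]
      rintro x ⟨hxU, hxP⟩
      rcases hxP with ⟨y, hyF, hyU⟩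
      rcases hyU with ⟨j, hj1, hje, hyj⟩
      have hxy : x ∈ iterUnion F 1 y := iter_one.mpr ((hsymm y x).mp hyF)
      have hxw : x ∈ iterUnion F (1 + j) w := iter_trans hxy hyj
      have hxW : x ∈ W := by
        rcases hje with ⟨b, hb⟩
        exact ⟨1 + j, ⟨b, by omega⟩, hxw⟩
      exact (Set.eq_empty_iff_forall_notMem.mp hUW x) ⟨hxU, hxW⟩
    · rw [IndepMF, Set.eq_empty_iff_forall_notMem]
      rintro x ⟨hxW, hxP⟩
      rcases hxP with ⟨y, hyF, hyW⟩
      rcases hyW with ⟨j, hjo, hyj⟩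
      have hxy : x ∈ iterUnion F 1 y := iter_one.mpr ((hsymm y x).mp hyF)
      have hxw : x ∈ iterUnion F (1 + j) w := iter_trans hxy hyj
      have hxU : x ∈ U := by
        rcases hjo with ⟨b, hb⟩
        exact ⟨1 + j, by omega, ⟨b + 1, by omega⟩, hxw⟩
      exact (Set.eq_empty_iff_forall_notMem.mp hUW x) ⟨hxU, hxW⟩
    · ext x
      simp only [Set.mem_union, Set.mem_univ, iff_true]
      rcases hconn x w with ⟨n, hn1, hxn⟩
      rcases Nat.even_or_odd n with he | ho
      · exact Or.inl ⟨n, hn1, he, hxn⟩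
      · exact Or.inr ⟨n, ho, hxn⟩
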